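/- arXiv:2408.13344 — 3 statements merged into one kernel-verified Lean document; each statement's English description precedes it below -/
import Mathlib

section
/- The solution formula x(t) = ((ξ₀ - ξ_s) ξ_l e^{-r t} + ξ_s(ξ_l - ξ₀)) / ((ξ₀ - ξ_s) e^{-r t} + ξ_l - ξ₀), with 0 < ξ_s < ξ₀ < ξ_l and r > 0, satisfies sqrt(x(t)) ≤ sqrt(ξ_l(ξ₀ - ξ_s)/(ξ_l - ξ₀)) · e^{-rt/2} + sqrt(ξ_s) for all t ≥ 0. -/
open Real

lemma sqrt_add_le' (a b : ℝ) (ha : 0 ≤ a) (hb : 0 ≤ b) :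
    Real.sqrt (a + b) ≤ Real.sqrt a + Real.sqrt b := by
  have h : a + b ≤ (Real.sqrt a + Real.sqrt b) ^ 2 := by
    have h1 := Real.sq_sqrt ha
    have h2 := Real.sq_sqrt hb
    have h3 : 0 ≤ Real.sqrt a * Real.sqrt b :=
      mul_nonneg (Real.sqrt_nonneg a) (Real.sqrt_nonneg b)
    nlinarith
  calc Real.sqrt (a + b) ≤ Real.sqrt ((Real.sqrt a + Real.sqrt b) ^ 2) :=
        Real.sqrt_le_sqrt h
    _ = Real.sqrt a + Real.sqrt b := by
        rw [Real.sqrt_sq (by positivity)]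

/-- The explicit comparison solution satisfies the exponential-decay-plus-ultimate-bound
estimate `√x(t) ≤ √(ξ_l(ξ₀-ξ_s)/(ξ_l-ξ₀)) e^{-rt/2} + √ξ_s`. -/
theorem stmt3 (ξs ξl ξ₀ r : ℝ) (hs : 0 < ξs) (h₀ : ξs < ξ₀) (hl : ξ₀ < ξl) (hr : 0 < r)
    (x : ℝ → ℝ)
    (hx : ∀ t, x t = ((ξ₀ - ξs) * ξl * Real.exp (-r * t) + ξs * (ξl - ξ₀)) /
      ((ξ₀ - ξs) * Real.exp (-r * t) + (ξl - ξ₀))) :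
    ∀ t ≥ (0 : ℝ),
      Real.sqrt (x t)
        ≤ Real.sqrt (ξl * (ξ₀ - ξs) / (ξl - ξ₀)) * Real.exp (-(r * t) / 2)
          + Real.sqrt ξs := by
  intro t ht
  set E := Real.exp (-r * t) with hE
  have hE0 : 0 < E := Real.exp_pos _
  have h0s : 0 < ξ₀ - ξs := by linarith
  have hlξ : 0 < ξl - ξ₀ := by linarith
  have hD : 0 < (ξ₀ - ξs) * E + (ξl - ξ₀) := by positivity
  have hlpos : 0 < ξl := lt_trans hs (lt_trans h₀ hl)
  have hA : 0 ≤ ξl * (ξ₀ - ξs) / (ξl - ξ₀) :=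
    div_nonneg (mul_nonneg hlpos.le h0s.le) hlξ.le
  -- key bound: x t ≤ A * E + ξs with A = ξl (ξ₀-ξs) / (ξl-ξ₀)
  have hxle : x t ≤ ξl * (ξ₀ - ξs) / (ξl - ξ₀) * E + ξs := by
    rw [hx t, ← hE, div_le_iff₀ hD, div_mul_eq_mul_div, div_add' _ _ _ (ne_of_gt hlξ),
      div_mul_eq_mul_div, le_div_iff₀ hlξ]
    nlinarith [mul_pos (mul_pos (mul_pos (lt_trans hs (lt_trans h₀ hl)) h0s) h0s)
        (mul_pos hE0 hE0),
      mul_pos (mul_pos (mul_pos hs hlξ) h0s) hE0]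
  calc Real.sqrt (x t) ≤ Real.sqrt (ξl * (ξ₀ - ξs) / (ξl - ξ₀) * E + ξs) :=
        Real.sqrt_le_sqrt hxle
    _ ≤ Real.sqrt (ξl * (ξ₀ - ξs) / (ξl - ξ₀) * E) + Real.sqrt ξs :=
        sqrt_add_le' _ _ (mul_nonneg hA hE0.le) hs.le
    _ = Real.sqrt (ξl * (ξ₀ - ξs) / (ξl - ξ₀)) * Real.exp (-(r * t) / 2) + Real.sqrt ξs := by
        rw [Real.sqrt_mul hA, hE, ← Real.exp_half]
        ring_nf
end

section
/- The function x(ξ₀) = ((ξ₀ - ξ_s) ξ_l e^{-r t} + ξ_s(ξ_l - ξ₀)) / ((ξ₀ - ξ_s) e^{-r t} + ξ_l - ξ₀) is monotonically increasing in ξ₀ on the interval (ξ_s, ξ_l), for every fixed t ≥ 0, r > 0, and 0 < ξ_s < ξ_l. -/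
open Real

/-- For each fixed `t ≥ 0`, `r > 0` and `0 < ξ_s < ξ_l`, the explicit comparison-solution
formula is strictly increasing as a function of the initial value `ξ₀ ∈ (ξ_s, ξ_l)`. -/
theorem stmt4 (ξs ξl r t : ℝ) (hs : 0 < ξs) (hlt : ξs < ξl) (hr : 0 < r) (ht : 0 ≤ t) :
    StrictMonoOn
      (fun ξ₀ : ℝ => ((ξ₀ - ξs) * ξl * Real.exp (-r * t) + ξs * (ξl - ξ₀)) /
        ((ξ₀ - ξs) * Real.exp (-r * t) + (ξl - ξ₀)))
      (Set.Ioo ξs ξl) := by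
  intro a ha b hb hab
  have hE : 0 < Real.exp (-r * t) := Real.exp_pos _
  set E := Real.exp (-r * t) with hEdef
  have hDa : 0 < (a - ξs) * E + (ξl - a) := by
    have := ha.1; have := ha.2; nlinarith
  have hDb : 0 < (b - ξs) * E + (ξl - b) := by
    have := hb.1; have := hb.2; nlinarith
  simp only
  rw [div_lt_div_iff₀ hDa hDb]
  nlinarith [mul_pos (mul_pos hE (sub_pos.mpr hab))
      (mul_pos (sub_pos.mpr hlt) (sub_pos.mpr hlt))]
end

section
/- Suppose A₀, ΔA : [0,∞) → ℝ^{n×n}, B₀, ΔB : [0,∞) → ℝⁿ, K symmetric, P : [0,∞) → ℝ^{n×n} C¹ with P(t) ≤ p̄ I, and Ṗ + P H₀ + H₀ᵀ P ≤ -q₀ P where H₀ = A₀ - B₀B₀ᵀK, with pI ≤ P(t). If 2p̄ |ΔA(t) - (B₀(t)ΔB(t)ᵀ + ΔB(t)B₀(t)ᵀ + ΔB(t)ΔB(t)ᵀ)K| ≤ (q₀ p)/2 for all t ≥ 0, then Ṗ + P H + Hᵀ P ≤ -(q₀/2) P, where H = (A₀+ΔA) - (B₀+ΔB)(B₀+ΔB)ᵀK.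 -/
/-!
Write `H = H₀ + M` with `M = ΔA - (B₀ΔBᵀ + ΔB B₀ᵀ + ΔB ΔBᵀ)K`. The extra term
`PM + MᵀP` is self-adjoint of norm at most `2‖P‖‖M‖ ≤ 2p̄‖M‖ ≤ q₀p/2`, so in the
Loewner order it is bounded by `(q₀p/2) I ≤ (q₀/2) P`; adding it to the nominal
inequality costs half of the decay rate `q₀`.
-/

open Matrix
open scoped Matrix.Norms.L2Operator MatrixOrder

section

variable {A : Type*} [NormedRing A] [StarRing A] [NormedAlgebra ℝ A] [PartialOrder A]
  [StarOrderedRing A] [IsometricContinuousFunctionalCalculus ℝ A IsSelfAdjoint]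

lemma IsSelfAdjoint.le_algebraMap_norm {a : A} (ha : IsSelfAdjoint a) :
    a ≤ algebraMap ℝ A ‖a‖ :=
  le_algebraMap_of_spectrum_le (fun r hr => (Real.le_norm_self r).trans <|
    cfc_id ℝ a ha ▸ norm_apply_le_norm_cfc id a hr) ha

variable [NonnegSpectrumClass ℝ A]

lemma norm_le_of_nonneg_of_le_algebraMap {a : A} {r : ℝ} (hr : 0 ≤ r) (ha : 0 ≤ a)
    (har : a ≤ algebraMap ℝ A r) : ‖a‖ ≤ r := by
  have hsa : IsSelfAdjoint a := .of_nonneg ha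
  rw [← cfc_id ℝ a]
  refine norm_cfc_le hr fun x hx => ?_
  rw [id, Real.norm_eq_abs, abs_of_nonneg (spectrum_nonneg_of_nonneg ha hx)]
  exact (le_algebraMap_iff_spectrum_le hsa).1 har x hx

theorem mul_add_star_mul_le_smul [NormedStarGroup A] [StarModule ℝ A] {P M : A} {p pbar c : ℝ}
    (hp : 0 ≤ p) (hc : 0 ≤ c) (hPl : algebraMap ℝ A p ≤ P) (hPu : P ≤ algebraMap ℝ A pbar)
    (hM : 2 * pbar * ‖M‖ ≤ c * p) :
    P * M + star M * P ≤ c • P := by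
  nontriviality A
  have hP : 0 ≤ P := (algebraMap_nonneg A hp).trans hPl
  have hPsa : IsSelfAdjoint P := .of_nonneg hP
  -- the spectrum of `P` is nonempty and lies in `[p, pbar]`
  have hpbar : 0 ≤ pbar := by
    obtain ⟨x, hx⟩ := ContinuousFunctionalCalculus.spectrum_nonempty (R := ℝ) P hPsa
    exact (spectrum_nonneg_of_nonneg hP hx).trans
      ((le_algebraMap_iff_spectrum_le hPsa).1 hPu x hx)
  have hnorm : ‖P * M + star M * P‖ ≤ 2 * pbar * ‖M‖ := by
    have := norm_le_of_nonneg_of_le_algebraMap hpbar hP hPu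
    calc ‖P * M + star M * P‖ ≤ ‖P‖ * ‖M‖ + ‖M‖ * ‖P‖ := by
          grw [norm_add_le, norm_mul_le, norm_mul_le, norm_star]
      _ ≤ 2 * pbar * ‖M‖ := by nlinarith [norm_nonneg M]
  have hsa : IsSelfAdjoint (P * M + star M * P) := by
    simp [IsSelfAdjoint, star_add, star_mul, hPsa.star_eq, add_comm]
  calc P * M + star M * P ≤ algebraMap ℝ A ‖P * M + star M * P‖ := hsa.le_algebraMap_norm
    _ ≤ algebraMap ℝ A (c * p) := algebraMap_mono A (hnorm.trans hM)
    _ = c • algebraMap ℝ A p := by rw [map_mul, Algebra.smul_def]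
    _ ≤ c • P := smul_le_smul_of_nonneg_left hPl hc
end

theorem stmt18_general {n : ℕ} (A₀ ΔA : ℝ → Matrix (Fin n) (Fin n) ℝ)
    (B₀ ΔB : ℝ → Fin n → ℝ)
    (K : Matrix (Fin n) (Fin n) ℝ)
    (P P' : ℝ → Matrix (Fin n) (Fin n) ℝ)
    (p pbar q₀ : ℝ) (hp : 0 < p) (hq₀ : 0 < q₀)
    (hPl : ∀ t ≥ (0 : ℝ), (P t - p • (1 : Matrix (Fin n) (Fin n) ℝ)).PosSemidef)
    (hPu : ∀ t ≥ (0 : ℝ), (pbar • (1 : Matrix (Fin n) (Fin n) ℝ) - P t).PosSemidef)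
    (H₀ : ℝ → Matrix (Fin n) (Fin n) ℝ)
    (hH₀ : ∀ t, H₀ t = A₀ t - vecMulVec (B₀ t) (B₀ t) * K)
    (hLyap0 : ∀ t ≥ (0 : ℝ),
      ((-q₀) • P t - (P' t + P t * H₀ t + (H₀ t)ᵀ * P t)).PosSemidef)
    (hsmall : ∀ t ≥ (0 : ℝ),
      2 * pbar * ‖ΔA t -
        (vecMulVec (B₀ t) (ΔB t) + vecMulVec (ΔB t) (B₀ t) +
          vecMulVec (ΔB t) (ΔB t)) * K‖ ≤ q₀ * p / 2)
    (H : ℝ → Matrix (Fin n) (Fin n) ℝ)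
    (hH : ∀ t, H t = (A₀ t + ΔA t) -
      vecMulVec (B₀ t + ΔB t) (B₀ t + ΔB t) * K) :
    ∀ t ≥ (0 : ℝ),
      ((-(q₀ / 2)) • P t - (P' t + P t * H t + (H t)ᵀ * P t)).PosSemidef := by
  intro t ht
  set M := ΔA t - (vecMulVec (B₀ t) (ΔB t) + vecMulVec (ΔB t) (B₀ t) +
    vecMulVec (ΔB t) (ΔB t)) * K with hM
  have hH_eq : H t = H₀ t + M := by
    rw [hH, hH₀, hM, add_vecMulVec, vecMulVec_add, vecMulVec_add]
    noncomm_ring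
  have hPM : P t * M + Mᵀ * P t ≤ (q₀ / 2) • P t := by
    have := mul_add_star_mul_le_smul (P := P t) (M := M) hp.le (half_pos hq₀).le
      (by rw [Algebra.algebraMap_eq_smul_one]; exact hPl t ht)
      (by rw [Algebra.algebraMap_eq_smul_one]; exact hPu t ht) (by linarith [hsmall t ht])
    rwa [star_eq_conjTranspose, conjTranspose_eq_transpose_of_trivial] at this
  rw [← le_iff]
  calc P' t + P t * H t + (H t)ᵀ * P t
        = (P' t + P t * H₀ t + (H₀ t)ᵀ * P t) + (P t * M + Mᵀ * P t) := by
          rw [hH_eq, transpose_add]; noncomm_ring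
    _ ≤ (-q₀) • P t + (q₀ / 2) • P t := add_le_add (le_iff.2 (hLyap0 t ht)) hPM
    _ = (-(q₀ / 2)) • P t := by module

/-- Robustness of the Lyapunov inequality to uncertainties in the coefficient matrices:
if `Ṗ + PH₀ + H₀ᵀP ≤ -q₀P` for the nominal `H₀ = A₀ - B₀B₀ᵀK`, `pI ≤ P ≤ p̄I`, and the
uncertainty satisfies `2p̄|ΔA - (B₀ΔBᵀ + ΔB B₀ᵀ + ΔB ΔBᵀ)K| ≤ q₀p/2`, then
`Ṗ + PH + HᵀP ≤ -(q₀/2)P` for `H = (A₀+ΔA) - (B₀+ΔB)(B₀+ΔB)ᵀK`. -/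
theorem stmt18 {n : ℕ} (A₀ ΔA : ℝ → Matrix (Fin n) (Fin n) ℝ)
    (B₀ ΔB : ℝ → Fin n → ℝ)
    (K : Matrix (Fin n) (Fin n) ℝ) (hKsymm : Kᵀ = K)
    (P P' : ℝ → Matrix (Fin n) (Fin n) ℝ) (hP : ∀ t, HasDerivAt P (P' t) t)
    (p pbar q₀ : ℝ) (hp : 0 < p) (hq₀ : 0 < q₀)
    (hPl : ∀ t ≥ (0 : ℝ), (P t - p • (1 : Matrix (Fin n) (Fin n) ℝ)).PosSemidef)
    (hPu : ∀ t ≥ (0 : ℝ), (pbar • (1 : Matrix (Fin n) (Fin n) ℝ) - P t).PosSemidef)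
    (H₀ : ℝ → Matrix (Fin n) (Fin n) ℝ)
    (hH₀ : ∀ t, H₀ t = A₀ t - vecMulVec (B₀ t) (B₀ t) * K)
    (hLyap0 : ∀ t ≥ (0 : ℝ),
      ((-q₀) • P t - (P' t + P t * H₀ t + (H₀ t)ᵀ * P t)).PosSemidef)
    (hsmall : ∀ t ≥ (0 : ℝ),
      2 * pbar * ‖ΔA t -
        (vecMulVec (B₀ t) (ΔB t) + vecMulVec (ΔB t) (B₀ t) +
          vecMulVec (ΔB t) (ΔB t)) * K‖ ≤ q₀ * p / 2)
    (H : ℝ → Matrix (Fin n) (Fin n) ℝ)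
    (hH : ∀ t, H t = (A₀ t + ΔA t) -
      vecMulVec (B₀ t + ΔB t) (B₀ t + ΔB t) * K) :
    ∀ t ≥ (0 : ℝ),
      ((-(q₀ / 2)) • P t - (P' t + P t * H t + (H t)ᵀ * P t)).PosSemidef :=
  stmt18_general A₀ ΔA B₀ ΔB K P P' p pbar q₀ hp hq₀ hPl hPu H₀ hH₀ hLyap0 hsmall H hH
end
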